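/- arXiv:2509.10168 — 4 statements merged into one kernel-verified Lean document; each statement's English description precedes it below -/
import Mathlib

section
/- Let F be a field, S a subgroup of F^×, and a, b ∈ F^× with aS = -bS (i.e., ab⁻¹ ∈ -S). Then b·S = (1-a)(1-a⁻¹)⁻¹·S whenever a ≠ 1; consequently, in the Milnor K-group modulo S, every pure tensor a₁S ⊗ ... ⊗ aₙS with aᵢS = -aⱼS for some i < j lies in the Steinberg subgroup St_n(S). -/
open scoped TensorProduct

variable {F : Type*} [Field F]

instance (S : Subgroup Fˣ) : Module ℤ (Additive (Fˣ ⧸ S)) :=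
  AddCommGroup.toIntModule (Additive (Fˣ ⧸ S))

/-- The `n`-fold tensor power `(F^×/S)^{⊗n}` (written additively, over `ℤ`). -/
abbrev TensorPowerModS (S : Subgroup Fˣ) (n : ℕ) : Type _ :=
  PiTensorProduct ℤ (fun _ : Fin n => Additive (Fˣ ⧸ S))

/-- The pure tensor `a₁S ⊗ ⋯ ⊗ aₙS`. -/
noncomputable def pureTensorModS (S : Subgroup Fˣ) {n : ℕ} (a : Fin n → Fˣ) :
    TensorPowerModS S n :=
  PiTensorProduct.tprod ℤ (fun i => Additive.ofMul (QuotientGroup.mk (a i) : Fˣ ⧸ S))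

/-- The Steinberg condition modulo `S`: `1 ∈ aS + bS`. -/
def SteinbergRel (S : Subgroup Fˣ) (a b : Fˣ) : Prop :=
  ∃ s t : Fˣ, s ∈ S ∧ t ∈ S ∧ ((a * s : Fˣ) : F) + ((b * t : Fˣ) : F) = 1

/-- The Steinberg subgroup `St_n(S)` of `(F^×/S)^{⊗n}`: generated by the pure tensors
`a₁S ⊗ ⋯ ⊗ aₙS` with `1 ∈ aᵢS + aⱼS` for some `i < j`.  The quotient is the Milnor
`K`-group `K^M_n(F)/S`. -/
noncomputable def SteinbergSubgroup (S : Subgroup Fˣ) (n : ℕ) :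
    Submodule ℤ (TensorPowerModS S n) :=
  Submodule.span ℤ {x | ∃ a : Fin n → Fˣ,
    (∃ i j : Fin n, i < j ∧ SteinbergRel S (a i) (a j)) ∧ x = pureTensorModS S a}

/-! Modulo `S` we have `aⱼ ≡ -aᵢ`, and for `c ≠ 0, 1` the identity `-c = (1 - c) / (1 - c⁻¹)` splits
`{…, c, …, -c, …}` into `{…, c, …, 1 - c, …} - {…, c, …, 1 - c⁻¹, …}`; the second term equals
`-{…, c⁻¹, …, 1 - c⁻¹, …}`, so both are Steinberg generators. -/

theorem one_sub_mul_inv_one_sub_inv {K : Type*} [Field K] {a : K} (ha₀ : a ≠ 0) (ha₁ : a ≠ 1) :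
    (1 - a) * (1 - a⁻¹)⁻¹ = -a := by
  have : 1 - a⁻¹ ≠ 0 := sub_ne_zero.mpr (Ne.symm (inv_ne_one.mpr ha₁))
  field_simp
  ring

theorem eq_neg_mul_inv_of_mul_inv_eq_neg {G : Type*} [CommGroup G] [HasDistribNeg G] {a b s : G}
    (h : a * b⁻¹ = -s) : b = -a * s⁻¹ := by
  rw [mul_inv_eq_iff_eq_mul] at h
  simp only [h, neg_mul, neg_neg]
  rw [mul_comm s, mul_inv_cancel_right]

namespace PureTensorModS

variable (S : Subgroup Fˣ) {n : ℕ}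

noncomputable def multilinear (n : ℕ) :
    MultilinearMap ℤ (fun _ : Fin n => Additive Fˣ) (TensorPowerModS S n) :=
  (PiTensorProduct.tprod ℤ).compLinearMap fun _ =>
    AddMonoidHom.toIntLinearMap (M := Additive Fˣ) (M₂ := Additive (Fˣ ⧸ S))
      (QuotientGroup.mk' S).toAdditive

theorem eq_multilinear (a : Fin n → Fˣ) :
    pureTensorModS S a = multilinear S n (Additive.ofMul ∘ a) := rfl

theorem update_mul (a : Fin n → Fˣ) (j : Fin n) (x y : Fˣ) :
    pureTensorModS S (Function.update a j (x * y)) =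
      pureTensorModS S (Function.update a j x) + pureTensorModS S (Function.update a j y) := by
  classical
  simp only [eq_multilinear, Function.comp_update, ofMul_mul, MultilinearMap.map_update_add]

theorem update_inv (a : Fin n → Fˣ) (j : Fin n) (x : Fˣ) :
    pureTensorModS S (Function.update a j x⁻¹) =
      (-1 : ℤ) • pureTensorModS S (Function.update a j x) := by
  classical
  rw [eq_multilinear, eq_multilinear, Function.comp_update, Function.comp_update, ofMul_inv,
    ← neg_one_zsmul, MultilinearMap.map_update_smul]

theorem eq_zero_of_mem {a : Fin n → Fˣ} {k : Fin n} (hk : a k ∈ S) : pureTensorModS S a = 0 :=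
  MultilinearMap.map_coord_zero _ k <| by
    simpa [QuotientGroup.eq_one_iff] using hk

theorem update_mul_of_mem (a : Fin n → Fˣ) (j : Fin n) (x : Fˣ) {s : Fˣ} (hs : s ∈ S) :
    pureTensorModS S (Function.update a j (x * s)) = pureTensorModS S (Function.update a j x) := by
  have hs' : Function.update a j s j ∈ S := by rwa [Function.update_self]
  rw [update_mul, eq_zero_of_mem S hs', add_zero]

end PureTensorModS

theorem pureTensorModS_mem_steinbergSubgroup (S : Subgroup Fˣ) {n : ℕ} {a : Fin n → Fˣ}
    {i j : Fin n} (hij : i < j) (h : (a i : F) + a j = 1) :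
    pureTensorModS S a ∈ SteinbergSubgroup S n :=
  Submodule.subset_span ⟨a, ⟨i, j, hij, 1, 1, S.one_mem, S.one_mem, by simpa using h⟩, rfl⟩

theorem pureTensorModS_update_neg_mem_steinbergSubgroup (S : Subgroup Fˣ) {n : ℕ}
    (a : Fin n → Fˣ) {i j : Fin n} (hij : i < j) :
    pureTensorModS S (Function.update a j (-a i)) ∈ SteinbergSubgroup S n := by
  have hji : j ≠ i := hij.ne'
  by_cases hc : a i = 1
  · rw [PureTensorModS.eq_zero_of_mem S (k := i) (by simp [Function.update_of_ne hji.symm, hc])]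
    exact zero_mem _
  set c := a i with hc_def
  have hc₁ : (c : F) ≠ 1 := Units.val_eq_one.not.mpr hc
  let u : Fˣ := Units.mk0 (1 - c) (sub_ne_zero.mpr (Ne.symm hc₁))
  let v : Fˣ := Units.mk0 (1 - (c : F)⁻¹) (sub_ne_zero.mpr (Ne.symm (inv_ne_one.mpr hc₁)))
  have hneg : -c = u * v⁻¹ := Units.ext <| by
    simp [u, v, ← one_sub_mul_inv_one_sub_inv c.ne_zero hc₁]
  have hv : pureTensorModS S (Function.update a j v) =
      (-1 : ℤ) • pureTensorModS S (Function.update (Function.update a j v) i c⁻¹) := by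
    rw [← PureTensorModS.update_inv, inv_inv,
      Function.update_eq_self_iff.mpr (Function.update_of_ne hji.symm ..).symm]
  rw [hneg, PureTensorModS.update_mul, PureTensorModS.update_inv, hv, smul_smul]
  refine add_mem (pureTensorModS_mem_steinbergSubgroup S hij ?_)
    (Submodule.smul_mem _ _ (pureTensorModS_mem_steinbergSubgroup S hij ?_))
  · simp [Function.update_of_ne hji.symm, u, ← hc_def]
  · simp [Function.update_of_ne hji, v]

/-- Let `S ≤ F^×` and `a, b ∈ F^×` with `aS = -bS`.  Then
`bS = (1-a)(1-a⁻¹)⁻¹S` whenever `a ≠ 1`; consequently every pure tensor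
`a₁S ⊗ ⋯ ⊗ aₙS` with `aᵢS = -aⱼS` for some `i < j` lies in the Steinberg subgroup
`St_n(S)`. -/
theorem statement8 (S : Subgroup Fˣ) :
    (∀ a b : Fˣ, (∃ s ∈ S, a * b⁻¹ = -s) → a ≠ 1 →
      ∃ s ∈ S, (b : F) = (1 - (a : F)) * (1 - (a : F)⁻¹)⁻¹ * ((s : Fˣ) : F)) ∧
    (∀ (n : ℕ) (a : Fin n → Fˣ) (i j : Fin n), i < j →
      (∃ s ∈ S, a i * (a j)⁻¹ = -s) →
      pureTensorModS S a ∈ SteinbergSubgroup S n) := by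
  refine ⟨fun a b ⟨s, hs, h⟩ ha => ⟨s⁻¹, S.inv_mem hs, ?_⟩, fun n a i j hij ⟨s, hs, h⟩ => ?_⟩
  · rw [eq_neg_mul_inv_of_mul_inv_eq_neg h,
      one_sub_mul_inv_one_sub_inv a.ne_zero (Units.val_eq_one.not.mpr ha)]
    push_cast
    rfl
  · have ha : a = Function.update a j (-a i * s⁻¹) := by
      rw [← eq_neg_mul_inv_of_mul_inv_eq_neg h, Function.update_eq_self]
    rw [ha, PureTensorModS.update_mul_of_mem S _ _ _ (S.inv_mem hs)]
    exact pureTensorModS_update_neg_mem_steinbergSubgroup S a hij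
end

section
/- Let (G, θ) = A ⋊ (Ḡ, θ̄) be an extension of cyclotomic pro-p pairs with A ≅ Z_p^m, and write H¹(G) = H¹(A-part) ⊕ inf(H¹(Ḡ)) with basis elements β_l (l ∈ L) restricting to a basis of H¹(A) and to 0 on Ḡ. Suppose for all l: β_l ∪ β_l = ε ∪ β_l in H²(G) (where ε = ε_G), and H²(G) decomposes as a direct sum ⊕_j ⊕_{l₁<...<l_j} inf(H^{2-j}(Ḡ)) ∪ β_{l₁} ∪ ... ∪ β_{l_j} with each summand injectively embedded. Then every φ ∈ H¹(G) not lying in inf(H¹(Ḡ)) is rigid: if φ ∪ ψ = 0 for ψ ∈ H¹(G), then ψ ∈ ⟨φ + ε⟩ over F_p. -/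
open Finset in
private lemma double_sum_split' {L M : Type*} [Fintype L] [LinearOrder L] [AddCommMonoid M]
    (f : L → L → M) :
    ∑ l, ∑ l', f l l' =
      (∑ l, f l l) + ∑ l, ∑ l', (if l < l' then f l l' + f l' l else 0) := by
  have h1 : ∑ l, ∑ l', f l l' =
      ∑ l, ∑ l', ((if l' = l then f l l' else 0) + ((if l < l' then f l l' else 0)
        + (if l' < l then f l l' else 0))) := by
    refine Finset.sum_congr rfl fun l _ => Finset.sum_congr rfl fun l' _ => ?_
    rcases lt_trichotomy l l' with h|h|h
    · simp [h, h.ne', asymm h]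
    · simp [h, lt_irrefl]
    · simp [h, h.ne, asymm h]
  rw [h1]
  simp only [Finset.sum_add_distrib]
  have h2 : ∀ l : L, ∑ l', (if l' = l then f l l' else 0) = f l l := by
    intro l; simp
  have h3 : (∑ l, ∑ l', if l' < l then f l l' else 0)
      = ∑ l, ∑ l', if l < l' then f l' l else 0 := by
    rw [Finset.sum_comm]
  have h4 : (∑ l, ∑ l', if l < l' then f l l' else 0)
      + (∑ l, ∑ l', if l < l' then f l' l else 0)
      = ∑ l, ∑ l', if l < l' then f l l' + f l' l else 0 := by
    rw [← Finset.sum_add_distrib]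
    refine Finset.sum_congr rfl fun l _ => ?_
    rw [← Finset.sum_add_distrib]
    refine Finset.sum_congr rfl fun l' _ => ?_
    split_ifs <;> simp
  simp only [h2]
  rw [h3, h4]

private lemma zmod2_ne_zero_eq_one : ∀ u : ZMod 2, u ≠ 0 → u = 1 := by decide

open Finset in
/-- Rigidity in extensions, as a linear-algebraic statement about the
cup product `H¹ × H¹ → H²` of an extension `G = A ⋊ Ḡ` of cyclotomic pro-`p` pairs.
Here `V` plays the role of `H¹(G)`, `W` of `H²(G)`, `Hbar` of the inflation
`inf(H¹(Ḡ)) ⊆ H¹(G)`, `ε` of the distinguished element `ε_G ∈ inf(H¹(Ḡ))` (which is `0`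
for odd `p`), and `β l` (`l ∈ L`) of the chosen elements restricting to a basis of
`H¹(A)` and to `0` on `Ḡ`.  The hypotheses are graded-commutativity of the cup product,
the decomposition `H¹(G) = H¹(A) ⊕ inf(H¹(Ḡ))`, the relations `β_l ∪ β_l = ε ∪ β_l`,
and the direct sum decomposition of `H²(G)` with injectively embedded summands
`inf(H²(Ḡ))`, `inf(H¹(Ḡ)) ∪ β_l`, and `(ℤ/p)·(β_l ∪ β_{l'})` for `l < l'`.
The conclusion: every `φ ∈ H¹(G)` not in `inf(H¹(Ḡ))` is rigid, i.e. `φ ∪ ψ = 0`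
implies `ψ ∈ ⟨φ + ε⟩`. -/
theorem statement12 (p : ℕ) (hp : p.Prime) [Fact p.Prime]
    {V W : Type*} [AddCommGroup V] [Module (ZMod p) V] [AddCommGroup W] [Module (ZMod p) W]
    (cup : V →ₗ[ZMod p] V →ₗ[ZMod p] W)
    (hanti : ∀ x y : V, cup x y = - cup y x)
    (Hbar : Submodule (ZMod p) V) (ε : V) (hε : ε ∈ Hbar)
    (hεodd : p ≠ 2 → ε = 0)
    {L : Type} [Fintype L] [LinearOrder L] (β : L → V)
    (hspan : ∀ φ : V, ∃ v ∈ Hbar, ∃ c : L → ZMod p, φ = v + ∑ l, c l • β l)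
    (hindep1 : ∀ v ∈ Hbar, ∀ c : L → ZMod p,
      v + ∑ l, c l • β l = 0 → v = 0 ∧ ∀ l, c l = 0)
    (hsquare : ∀ l : L, cup (β l) (β l) = cup ε (β l))
    (hindep2 : ∀ a ∈ Hbar, ∀ b ∈ Hbar, ∀ x : L → V, (∀ l, x l ∈ Hbar) →
      ∀ c : L → L → ZMod p,
        cup a b + (∑ l, cup (x l) (β l)) +
          (∑ l, ∑ l', if l < l' then c l l' • cup (β l) (β l') else 0) = 0 →
        cup a b = 0 ∧ (∀ l, x l = 0) ∧ ∀ l l', l < l' → c l l' = 0) :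
    ∀ φ : V, φ ∉ Hbar → ∀ ψ : V, cup φ ψ = 0 → ∃ c : ZMod p, ψ = c • (φ + ε) := by
  intro φ hφ ψ hcup
  obtain ⟨a, ha, c, hφeq⟩ := hspan φ
  obtain ⟨b, hb, d, hψeq⟩ := hspan ψ
  subst hφeq hψeq
  -- find a nonzero coefficient of φ
  have hl0 : ∃ l0, c l0 ≠ 0 := by
    by_contra h
    push_neg at h
    exact hφ (by simpa [h] using ha)
  obtain ⟨l0, hl0⟩ := hl0
  set x : L → V := fun l => d l • a - c l • b + (c l * d l) • ε with hxdef
  set e : L → L → ZMod p := fun l l' => c l * d l' - c l' * d l with hedef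
  -- key identity
  have key : cup a b + (∑ l, cup (x l) (β l)) +
      (∑ l, ∑ l', if l < l' then e l l' • cup (β l) (β l') else 0)
      = cup (a + ∑ l, c l • β l) (b + ∑ l, d l • β l) := by
    have h5 : ∀ t : V, cup (∑ l, c l • β l) t = ∑ l, c l • cup (β l) t := by
      intro t; simp
    have h6 : cup a (∑ l, d l • β l) = ∑ l, d l • cup a (β l) := by simp
    have h7 : ∀ l : L, cup (β l) (b + ∑ l', d l' • β l')
        = cup (β l) b + ∑ l', d l' • cup (β l) (β l') := by intro l; simp
    have expand : cup (a + ∑ l, c l • β l) (b + ∑ l, d l • β l)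
        = cup a b + (∑ l, d l • cup a (β l)) + (∑ l, c l • cup (β l) b)
          + ∑ l, ∑ l', (c l * d l') • cup (β l) (β l') := by
      calc cup (a + ∑ l, c l • β l) (b + ∑ l, d l • β l)
          = cup a (b + ∑ l, d l • β l)
            + ∑ l, c l • cup (β l) (b + ∑ l', d l' • β l') := by
            rw [show cup (a + ∑ l, c l • β l) = cup a + cup (∑ l, c l • β l)
              from map_add cup _ _, LinearMap.add_apply, h5]
        _ = (cup a b + ∑ l, d l • cup a (β l))
            + ∑ l, c l • (cup (β l) b + ∑ l', d l' • cup (β l) (β l')) := by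
            rw [map_add, h6]
            exact congrArg _ (Finset.sum_congr rfl fun l _ => by rw [h7])
        _ = cup a b + (∑ l, d l • cup a (β l)) + (∑ l, c l • cup (β l) b)
            + ∑ l, ∑ l', (c l * d l') • cup (β l) (β l') := by
            simp only [smul_add, Finset.sum_add_distrib, Finset.smul_sum, smul_smul]
            abel
    rw [expand,
      double_sum_split' (fun l l' => (c l * d l') • cup (β l) (β l'))]
    have hdiag : (∑ l, (c l * d l) • cup (β l) (β l))
        = ∑ l, (c l * d l) • cup ε (β l) := by
      refine Finset.sum_congr rfl fun l _ => by rw [hsquare]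
    have hoff : (∑ l, ∑ l', if l < l' then
          (c l * d l') • cup (β l) (β l') + (c l' * d l) • cup (β l') (β l) else 0)
        = ∑ l, ∑ l', if l < l' then e l l' • cup (β l) (β l') else 0 := by
      refine Finset.sum_congr rfl fun l _ => Finset.sum_congr rfl fun l' _ => ?_
      split_ifs with h
      · rw [hanti (β l') (β l), hedef]
        simp only [smul_neg, sub_smul]
        abel
      · rfl
    have hx : (∑ l, cup (x l) (β l))
        = (∑ l, d l • cup a (β l)) + (∑ l, c l • cup (β l) b)
          + ∑ l, (c l * d l) • cup ε (β l) := by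
      simp only [hxdef, map_add, map_sub, map_smul, LinearMap.add_apply, LinearMap.sub_apply,
        LinearMap.smul_apply, Finset.sum_add_distrib, Finset.sum_sub_distrib]
      have hswap : ∀ l : L, c l • cup (β l) b = -(c l • cup b (β l)) := by
        intro l; rw [hanti (β l) b]; simp
      simp only [hswap]
      simp only [Finset.sum_neg_distrib]
      abel
    rw [hx, hdiag, hoff]
    abel
  rw [hcup] at key
  have hxmem : ∀ l, x l ∈ Hbar := fun l =>
    Hbar.add_mem (Hbar.sub_mem (Hbar.smul_mem _ ha) (Hbar.smul_mem _ hb)) (Hbar.smul_mem _ hε)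
  obtain ⟨hab, hx0, he0⟩ := hindep2 a ha b hb x hxmem e key
  -- relation c l * d l' = c l' * d l for all l, l'
  have hrel : ∀ l l', c l * d l' = c l' * d l := by
    intro l l'
    rcases lt_trichotomy l l' with h|h|h
    · have hh := he0 l l' h; rw [hedef] at hh; linear_combination hh
    · subst h; ring
    · have hh := he0 l' l h; rw [hedef] at hh; linear_combination -hh
  set k : ZMod p := d l0 * (c l0)⁻¹ with hkdef
  refine ⟨k, ?_⟩
  have hinv : (c l0)⁻¹ * c l0 = 1 := inv_mul_cancel₀ hl0
  have hd : ∀ l, d l = k * c l := by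
    intro l
    calc d l = ((c l0)⁻¹ * c l0) * d l := by rw [hinv, one_mul]
      _ = (c l0)⁻¹ * (c l0 * d l) := by ring
      _ = (c l0)⁻¹ * (c l * d l0) := by rw [hrel l0 l]
      _ = k * c l := by rw [hkdef]; ring
  -- from x l0 = 0 : b = k • a + (k * c l0) • ε
  have hbval : b = k • a + (k * c l0) • ε := by
    have h0 := hx0 l0
    simp only [hxdef] at h0
    have h1 : c l0 • b = d l0 • a + (c l0 * d l0) • ε := by
      apply eq_of_sub_eq_zero
      have habel : c l0 • b - (d l0 • a + (c l0 * d l0) • ε)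
          = -(d l0 • a - c l0 • b + (c l0 * d l0) • ε) := by abel
      rw [habel, h0, neg_zero]
    have h2 : ((c l0)⁻¹ * c l0) • b
        = ((c l0)⁻¹ * d l0) • a + ((c l0)⁻¹ * (c l0 * d l0)) • ε := by
      rw [mul_smul, mul_smul, mul_smul, h1]
      module
    rw [hinv, one_smul] at h2
    rw [h2]
    have e1 : (c l0)⁻¹ * d l0 = k := by rw [hkdef]; ring
    have e2 : (c l0)⁻¹ * (c l0 * d l0) = k * c l0 := by
      calc (c l0)⁻¹ * (c l0 * d l0) = ((c l0)⁻¹ * c l0) * d l0 := by ring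
        _ = d l0 := by rw [hinv, one_mul]
        _ = d l0 * ((c l0)⁻¹ * c l0) := by rw [hinv, mul_one]
        _ = k * c l0 := by rw [hkdef]; ring
    rw [e1, e2]
  -- final ε adjustment
  have hεfix : (k * c l0) • ε = k • ε := by
    by_cases hε0 : ε = 0
    · simp [hε0]
    · have hp2 : p = 2 := by by_contra h; exact hε0 (hεodd h)
      subst hp2
      have hc1 : c l0 = 1 := zmod2_ne_zero_eq_one _ hl0
      rw [hc1, mul_one]
  rw [hbval]
  simp only [hd]
  rw [hεfix]
  simp only [smul_add, Finset.smul_sum, smul_smul]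
  abel
end

section
/- Let F be a field of characteristic 0 with a valuation v such that p ∈ m_v (residue characteristic p) and 1 + m_v ⊆ (F^×)^p. If additionally 1 + m_v = (1 + m_v)^p, then every a ∈ m_v \ p·m_v is a p-th power in F^×: indeed, writing 1 + a = (1+b)^p with b ∈ m_v gives 1 + a ∈ 1 + b^p + p·m_v, and the ultrametric inequality yields a ∈ b^p·(1 + m_v) ⊆ (F^×)^p. -/
/-!
Write `1 + a = (1 + b)^p` with `v b < 1`. The binomial expansion gives `a = b^p + p d` with
`v d < 1`, and `v p ≤ v a` because `a ∉ p·m_v`, so `v (a - b^p) < v a`. Hence `a = b^p (1 + t)`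
with `v t < 1`, and `1 + t` is a `p`-th power by hypothesis.
-/

namespace Valuation

variable {R K Γ₀ : Type*} [LinearOrderedCommGroupWithZero Γ₀]

theorem map_natCast_le_one [Ring R] (v : Valuation R Γ₀) (n : ℕ) : v n ≤ 1 := by
  induction n with
  | zero => simp
  | succ n ih =>
    push_cast
    exact v.map_add_le ih v.map_one.le

theorem exists_one_add_pow_prime_eq [CommRing R] (v : Valuation R Γ₀) {p : ℕ} (hp : p.Prime)
    {b : R} (hb : v b ≤ 1) : ∃ d, v d ≤ v b ∧ (1 + b) ^ p = 1 + b ^ p + p * d := by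
  refine ⟨b * ∑ k ∈ Finset.Ioo 0 p, (1 : R) ^ (k - 1) * b ^ (p - k - 1) * ↑(p.choose k / p),
    ?_, by rw [add_pow_prime_eq hp]; ring⟩
  rw [v.map_mul]
  refine mul_le_of_le_one_right' (v.map_sum_le fun k _ => ?_)
  rw [v.map_mul, v.map_mul, one_pow, v.map_one, one_mul, v.map_pow]
  exact mul_le_one' (pow_le_one' hb _) (v.map_natCast_le_one _)

variable [Field K] (v : Valuation K Γ₀)

theorem exists_lt_one_and_eq_mul_of_lt {a x : K} (h : v a < v x) :
    ∃ c, v c < 1 ∧ a = x * c := by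
  have hx : 0 < v x := zero_le.trans_lt h
  refine ⟨a / x, ?_, by field_simp [v.pos_iff.1 hx]⟩
  rwa [map_div₀, div_lt_one₀ hx]

theorem exists_eq_mul_one_add_of_map_sub_lt {a c : K} (h : v (a - c) < v a) :
    ∃ t, v t < 1 ∧ a = c * (1 + t) := by
  have hca : v c = v a := v.map_eq_of_sub_lt (by rwa [v.map_sub_swap])
  have hc : 0 < v c := hca ▸ zero_le.trans_lt h
  refine ⟨(a - c) / c, ?_, by field_simp [v.pos_iff.1 hc]; ring⟩
  rwa [map_div₀, div_lt_one₀ hc, hca]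

end Valuation

theorem statement18_general (p : ℕ) (hp : p.Prime) (F : Type*) [Field F]
    (Γ : Type*) [LinearOrderedCommGroupWithZero Γ] (v : Valuation F Γ)
    (h1 : ∀ x : F, v x < 1 → ∃ y : F, 1 + x = y ^ p)
    (h2 : ∀ x : F, v x < 1 → ∃ b : F, v b < 1 ∧ 1 + x = (1 + b) ^ p) :
    ∀ a : F, v a < 1 → (¬ ∃ c : F, v c < 1 ∧ a = p * c) → ∃ y : F, a = y ^ p := by
  intro a ha hna
  have ha0 : a ≠ 0 := by
    rintro rfl
    exact hna ⟨0, by simp, by simp⟩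
  have hpa : v p ≤ v a := not_lt.1 fun h => hna (v.exists_lt_one_and_eq_mul_of_lt h)
  obtain ⟨b, hb, hab⟩ := h2 a ha
  obtain ⟨d, hdb, hd⟩ := v.exists_one_add_pow_prime_eq hp hb.le
  have hsmall : v (a - b ^ p) < v a := by
    rw [show a - b ^ p = p * d by linear_combination hab.trans hd, v.map_mul]
    calc v p * v d ≤ v a * v d := mul_le_mul_left hpa _
      _ < v a := mul_lt_of_lt_one_right (v.pos_iff.2 ha0) (hdb.trans_lt hb)
  obtain ⟨t, ht, hat⟩ := v.exists_eq_mul_one_add_of_map_sub_lt hsmall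
  obtain ⟨y, hy⟩ := h1 t ht
  exact ⟨b * y, by rw [hat, hy, mul_pow]⟩

/-- Let `F` be a field of characteristic `0` with a valuation `v` of
residue characteristic `p` (i.e. `v p < 1`) such that `1 + m_v ⊆ (F^×)^p` and
`1 + m_v = (1 + m_v)^p`.  Then every `a ∈ m_v \ p·m_v` is a `p`-th power in `F`. -/
theorem statement18 (p : ℕ) (hp : p.Prime) (F : Type*) [Field F] [CharZero F]
    (Γ : Type*) [LinearOrderedCommGroupWithZero Γ] (v : Valuation F Γ)
    (hres : v p < 1)
    (h1 : ∀ x : F, v x < 1 → ∃ y : F, 1 + x = y ^ p)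
    (h2 : ∀ x : F, v x < 1 → ∃ b : F, v b < 1 ∧ 1 + x = (1 + b) ^ p) :
    ∀ a : F, v a < 1 → (¬ ∃ c : F, v c < 1 ∧ a = p * c) → ∃ y : F, a = y ^ p :=
  statement18_general p hp F Γ v h1 h2
end

section
/- Let G be a pro-p group with a free pro-p product decomposition G = G₁ *_p ··· *_p Gₙ into closed subgroups. Then for any elements σ₁, ..., σₙ ∈ G, the conjugates also give a free decomposition: G = G₁^{σ₁} *_p ··· *_p Gₙ^{σₙ}, where Gᵢ^{σᵢ} = σᵢ⁻¹ Gᵢ σᵢ. -/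
/-- A pro-`p` group: a compact, Hausdorff, totally disconnected topological group in which
every open normal subgroup has index a power of `p`. -/
def IsProP (p : ℕ) (G : Type*) [Group G] [TopologicalSpace G] : Prop :=
  CompactSpace G ∧ T2Space G ∧ TotallyDisconnectedSpace G ∧ IsTopologicalGroup G ∧
    ∀ N : Subgroup G, N.Normal → IsOpen (N : Set G) → ∃ k : ℕ, N.index = p ^ k

/-- `G` is the free pro-`p` product of the family of closed subgroups `Gs i`,
expressed by the universal property of the coproduct in the category of pro-`p` groups. -/
def IsFreeProPProductFam (p : ℕ) (G : Type*) [Group G] [TopologicalSpace G]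
    {n : ℕ} (Gs : Fin n → Subgroup G) : Prop :=
  ∀ (K : Type) [Group K] [TopologicalSpace K], IsProP p K →
    ∀ (f : (i : Fin n) → ((Gs i) →* K)), (∀ i, Continuous (f i)) →
      ∃! F : G →* K, Continuous F ∧ ∀ (i : Fin n) (x : Gs i), F x = f i x


/-!
Both families are tested against pro-`p` targets `K`, and `K` is the inverse limit of its finite
quotients, so it suffices to treat finite `p`-groups `S`, by induction on `|S|`. The center `Z` of
`S` is nontrivial, so the conjugated family has the universal property for `S/Z`, giving `F'`.
Lift each `F'(σᵢ)` to `tᵢ ∈ S` and extend `x ↦ tᵢ fᵢ(σᵢ⁻¹ x σᵢ) tᵢ⁻¹` from the original factors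
to `F : G → S`. Uniqueness for `S/Z` shows that `F` lifts `F'`, so `F(σᵢ)` differs from `tᵢ` by a
central element; conjugating by it changes nothing, hence `F` restricts to `fᵢ` on `Gᵢ^{σᵢ}`.
The same computation run backwards gives uniqueness.
-/

section UniqueExtensions

variable {G : Type*} [Group G] [TopologicalSpace G] {ι : Type*}

/-- `IsFreeProPProductFam p G Hs` unfolds to `HasUniqueExtensions Hs K` for all pro-`p`
`K : Type`. -/
def HasUniqueExtensions (Hs : ι → Subgroup G) (K : Type*) [Group K] [TopologicalSpace K] :
    Prop :=
  ∀ f : (i : ι) → Hs i →* K, (∀ i, Continuous (f i)) →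
    ∃! F : G →* K, Continuous F ∧ ∀ i (x : Hs i), F x = f i x

theorem HasUniqueExtensions.of_subsingleton (Hs : ι → Subgroup G) (K : Type*) [Group K]
    [TopologicalSpace K] [Subsingleton K] : HasUniqueExtensions Hs K :=
  fun _ _ => ⟨1, ⟨continuous_const, fun _ _ => Subsingleton.elim _ _⟩,
    fun _ _ => MonoidHom.ext fun _ => Subsingleton.elim _ _⟩

end UniqueExtensions

section Profinite

variable {K : Type*} [Group K] [TopologicalSpace K] [IsTopologicalGroup K] [CompactSpace K]
  [TotallyDisconnectedSpace K]

theorem eq_of_forall_mk_eq {y z : K}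
    (h : ∀ N : OpenNormalSubgroup K, (y : K ⧸ N.toSubgroup) = z) : y = z :=
  ProfiniteGrp.toLimit_injective (ProfiniteGrp.of K) <| Subtype.ext <| funext h

theorem exists_mk_eq_of_compatible (x : ∀ N : OpenNormalSubgroup K, K ⧸ N.toSubgroup)
    (hx : ∀ M N : OpenNormalSubgroup K, (h : M ≤ N) →
      QuotientGroup.map _ _ (MonoidHom.id K) h (x M) = x N) :
    ∃ y : K, ∀ N : OpenNormalSubgroup K, (y : K ⧸ N.toSubgroup) = x N := by
  obtain ⟨y, hy⟩ := ProfiniteGrp.toLimit_surjective (ProfiniteGrp.of K)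
    ⟨x, fun {M N} f => hx M N (CategoryTheory.leOfHom f)⟩
  exact ⟨y, fun N => congrFun (congrArg Subtype.val hy) N⟩

theorem continuous_of_forall_continuous_mk {X : Type*} [TopologicalSpace X] {F : X → K}
    (h : ∀ N : OpenNormalSubgroup K, Continuous fun x => (F x : K ⧸ N.toSubgroup)) :
    Continuous F := by
  refine continuous_def.2 fun V hV => isOpen_iff_forall_mem_open.2 fun g hg => ?_
  obtain ⟨N, hN⟩ := ProfiniteGrp.exist_openNormalSubgroup_sub_open_nhds_of_one
    (hV.preimage (continuous_const_mul (F g))) (by simpa using hg)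
  refine ⟨_, fun x hx => ?_, (isOpen_discrete {(F g : K ⧸ N.toSubgroup)}).preimage (h N), rfl⟩
  simpa using hN (QuotientGroup.eq.1 (Set.mem_singleton_iff.1 hx).symm)

theorem exists_continuous_lift_of_compatible {X : Type*} [Group X] [TopologicalSpace X]
    (φ : ∀ N : OpenNormalSubgroup K, X →* K ⧸ N.toSubgroup) (hφ : ∀ N, Continuous (φ N))
    (hcompat : ∀ M N : OpenNormalSubgroup K, (h : M ≤ N) →
      (QuotientGroup.map _ _ (MonoidHom.id K) h).comp (φ M) = φ N) :
    ∃ F : X →* K, Continuous F ∧ ∀ N, (QuotientGroup.mk' N.toSubgroup).comp F = φ N := by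
  choose F hF using fun g => exists_mk_eq_of_compatible (fun N => φ N g)
    fun M N h => DFunLike.congr_fun (hcompat M N h) g
  refine ⟨{ toFun := F, map_one' := ?_, map_mul' := ?_ }, ?_, ?_⟩
  · exact eq_of_forall_mk_eq fun N => by rw [hF, map_one]; rfl
  · exact fun a b => eq_of_forall_mk_eq fun N => by
      rw [hF, map_mul, QuotientGroup.mk_mul, hF, hF]
  · exact continuous_of_forall_continuous_mk fun N => (hφ N).congr fun g => (hF g N).symm
  · exact fun N => MonoidHom.ext fun g => hF g N

theorem HasUniqueExtensions.of_quotients {G : Type*} [Group G] [TopologicalSpace G] {ι : Type*}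
    (Hs : ι → Subgroup G)
    (h : ∀ N : OpenNormalSubgroup K, HasUniqueExtensions Hs (K ⧸ N.toSubgroup)) :
    HasUniqueExtensions Hs K := by
  intro f hf
  choose φ hφ hφu using fun N : OpenNormalSubgroup K =>
    h N (fun i => (QuotientGroup.mk' N.toSubgroup).comp (f i))
      fun i => QuotientGroup.continuous_mk.comp (hf i)
  have hcompat : ∀ M N : OpenNormalSubgroup K, (hMN : M ≤ N) →
      (QuotientGroup.map _ _ (MonoidHom.id K) hMN).comp (φ M) = φ N := fun M N hMN =>
    hφu N _ ⟨(continuous_of_discreteTopology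
        (f := QuotientGroup.map _ _ (MonoidHom.id K) hMN)).comp (hφ M).1,
      fun i x => by rw [MonoidHom.comp_apply, (hφ M).2 i x]; rfl⟩
  obtain ⟨F, hFc, hF⟩ := exists_continuous_lift_of_compatible φ (fun N => (hφ N).1) hcompat
  refine ⟨F, ⟨hFc, fun i x => eq_of_forall_mk_eq fun N => ?_⟩, fun F₁ ⟨hF₁c, hF₁⟩ =>
    MonoidHom.ext fun g => eq_of_forall_mk_eq fun N => ?_⟩
  · exact (DFunLike.congr_fun (hF N) (x : G)).trans ((hφ N).2 i x)
  · have hF₁N : (QuotientGroup.mk' N.toSubgroup).comp F₁ = φ N :=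
      hφu N _ ⟨QuotientGroup.continuous_mk.comp hF₁c, fun i x => by
        rw [MonoidHom.comp_apply, hF₁ i x]; rfl⟩
    exact (DFunLike.congr_fun hF₁N g).trans (DFunLike.congr_fun (hF N) g).symm

end Profinite

section Conjugation

variable {G : Type*} [Group G]

theorem forall_conj_extends_iff {S : Type*} [Group S] {H : Subgroup G} {σ : G} (F : G →* S)
    (f : H.map (MulAut.conj σ⁻¹).toMonoidHom →* S) {t : S}
    (ht : t⁻¹ * F σ ∈ Subgroup.center S) :
    (∀ x : H, F x = t * f ((MulAut.conj σ⁻¹).toMonoidHom.subgroupMap H x) * t⁻¹) ↔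
      ∀ y : H.map (MulAut.conj σ⁻¹).toMonoidHom, F y = f y := by
  obtain ⟨z, hz, hFσ⟩ : ∃ z ∈ Subgroup.center S, F σ = t * z := ⟨_, ht, by group⟩
  have hF : ∀ x : H, F x = t * F ((MulAut.conj σ⁻¹).toMonoidHom.subgroupMap H x) * t⁻¹ := by
    intro x
    have hx : (x : G) = σ * ((MulAut.conj σ⁻¹).toMonoidHom.subgroupMap H x : G) * σ⁻¹ := by
      show (x : G) = σ * (σ⁻¹ * x * σ⁻¹⁻¹) * σ⁻¹
      group
    rw [hx, map_mul, map_mul, map_inv F, hFσ, mul_assoc t z, ← Subgroup.mem_center_iff.1 hz]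
    group
  simp_rw [hF, mul_left_inj, mul_right_inj]
  exact ((MonoidHom.subgroupMap_surjective _ H).forall (p := fun y => F y = f y)).symm

variable [TopologicalSpace G] {ι : Type*} (Hs : ι → Subgroup G) (σ : ι → G)

def conjFamily (i : ι) : Subgroup G := (Hs i).map (MulAut.conj (σ i)⁻¹).toMonoidHom

theorem continuous_subgroupMap_conj [IsTopologicalGroup G] (H : Subgroup G) (g : G) :
    Continuous ((MulAut.conj g).toMonoidHom.subgroupMap H) :=
  continuous_induced_rng.2 <| (continuous_const.mul continuous_subtype_val).mul continuous_const

theorem HasUniqueExtensions.conjFamily_of_center [IsTopologicalGroup G] {S : Type*} [Group S]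
    [TopologicalSpace S] [IsTopologicalGroup S] (hS : HasUniqueExtensions Hs S)
    (hSZ : HasUniqueExtensions Hs (S ⧸ Subgroup.center S))
    (hSZ' : HasUniqueExtensions (conjFamily Hs σ) (S ⧸ Subgroup.center S)) :
    HasUniqueExtensions (conjFamily Hs σ) S := by
  intro f hf
  set π := QuotientGroup.mk' (Subgroup.center S)
  obtain ⟨F', ⟨hF'c, hF'⟩, hF'u⟩ := hSZ' (fun i => π.comp (f i))
    fun i => QuotientGroup.continuous_mk.comp (hf i)
  choose t ht using fun i => QuotientGroup.mk'_surjective (Subgroup.center S) (F' (σ i))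
  let g i : Hs i →* S := (MulAut.conj (t i)).toMonoidHom.comp
    ((f i).comp ((MulAut.conj (σ i)⁻¹).toMonoidHom.subgroupMap (Hs i)))
  have hgc : ∀ i, Continuous (g i) := fun i =>
    (continuous_const.mul ((hf i).comp (continuous_subgroupMap_conj _ _))).mul continuous_const
  obtain ⟨F, ⟨hFc, hF⟩, hFu⟩ := hS g hgc
  have lift_iff : ∀ F₁ : G →* S, π.comp F₁ = F' →
      ((∀ i (x : Hs i), F₁ x = g i x) ↔ ∀ i (y : conjFamily Hs σ i), F₁ y = f i y) :=
    fun F₁ hF₁ => forall_congr' fun i => forall_conj_extends_iff F₁ (f i) <|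
      QuotientGroup.eq.1 <| (ht i).trans (DFunLike.congr_fun hF₁ (σ i)).symm
  have hF'g : ∀ i (x : Hs i), F' x = π (g i x) := by
    intro i x
    rw [(forall_conj_extends_iff F' (π.comp (f i)) (t := F' (σ i)) (by simp)).2 (hF' i) x, ← ht i]
    simp only [g, MonoidHom.comp_apply, MulEquiv.coe_toMonoidHom, MulAut.conj_apply, map_mul,
      map_inv]
    rfl
  have hπF : π.comp F = F' :=
    (hSZ (fun i => π.comp (g i)) fun i => QuotientGroup.continuous_mk.comp (hgc i)).unique
      ⟨QuotientGroup.continuous_mk.comp hFc, fun i x => by simp [hF i x]⟩ ⟨hF'c, hF'g⟩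
  refine ⟨F, ⟨hFc, (lift_iff F hπF).1 hF⟩, fun F₁ ⟨hF₁c, hF₁⟩ =>
    hFu F₁ ⟨hF₁c, (lift_iff F₁ ?_).2 hF₁⟩⟩
  exact hF'u _ ⟨QuotientGroup.continuous_mk.comp hF₁c, fun i y => by simp [hF₁ i y]⟩

end Conjugation

section ProP

variable {p : ℕ}

theorem IsPGroup.isProP (hp : p.Prime) {S : Type*} [Group S] [TopologicalSpace S]
    [DiscreteTopology S] [Finite S] (hS : IsPGroup p S) : IsProP p S := by
  have : Fact p.Prime := ⟨hp⟩
  refine ⟨inferInstance, inferInstance, inferInstance, inferInstance, fun N _ _ => ?_⟩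
  obtain ⟨k, hk⟩ := IsPGroup.iff_card.mp hS
  obtain ⟨j, -, hj⟩ := (Nat.dvd_prime_pow hp).mp (hk ▸ N.index_dvd_card)
  exact ⟨j, hj⟩

theorem IsProP.isPGroup_quotient {K : Type*} [Group K] [TopologicalSpace K] (hK : IsProP p K)
    (N : OpenNormalSubgroup K) : IsPGroup p (K ⧸ N.toSubgroup) :=
  let ⟨_, hk⟩ := hK.2.2.2.2 N.toSubgroup N.isNormal' N.isOpen'
  IsPGroup.of_card ((Subgroup.index_eq_card _).symm.trans hk)

theorem HasUniqueExtensions.conjFamily_of_isPGroup {G : Type*} [Group G] [TopologicalSpace G]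
    [IsTopologicalGroup G] {ι : Type*} (Hs : ι → Subgroup G) (σ : ι → G) (hp : p.Prime)
    (h : ∀ (S : Type) [Group S] [TopologicalSpace S] [DiscreteTopology S] [Finite S],
      IsPGroup p S → HasUniqueExtensions Hs S)
    (S : Type) [Group S] [TopologicalSpace S] [DiscreteTopology S] [Finite S]
    (hS : IsPGroup p S) : HasUniqueExtensions (conjFamily Hs σ) S := by
  have : Fact p.Prime := ⟨hp⟩
  induction hcard : Nat.card S using Nat.strong_induction_on generalizing S with
  | _ m ih =>
  rcases subsingleton_or_nontrivial S with _ | _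
  · exact .of_subsingleton _ S
  have : DiscreteTopology (S ⧸ Subgroup.center S) :=
    QuotientGroup.discreteTopology (isOpen_discrete _)
  have hZ : 1 < Nat.card (Subgroup.center S) :=
    Finite.one_lt_card_iff_nontrivial.2 hS.center_nontrivial
  have hlt : Nat.card (S ⧸ Subgroup.center S) < m := by
    rw [← hcard, Subgroup.card_eq_card_quotient_mul_card_subgroup (Subgroup.center S)]
    exact lt_mul_right Nat.card_pos hZ
  exact .conjFamily_of_center Hs σ (h S hS) (h _ (hS.to_quotient _))
    (ih _ hlt _ (hS.to_quotient _) rfl)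

end ProP

theorem statement19_general (p : ℕ) (hp : p.Prime) (G : Type*) [Group G] [TopologicalSpace G]
    (hG : IsProP p G) (n : ℕ) (Gs : Fin n → Subgroup G)
    (hfree : IsFreeProPProductFam p G Gs) (σ : Fin n → G) :
    IsFreeProPProductFam p G
      (fun i => (Gs i).map (MulAut.conj (σ i)⁻¹).toMonoidHom) := by
  have := hG.2.2.2.1
  intro K _ _ hK
  have := hK.1; have := hK.2.2.1; have := hK.2.2.2.1
  exact HasUniqueExtensions.of_quotients _ fun N =>
    .conjFamily_of_isPGroup Gs σ hp (fun S _ _ _ _ hS => hfree S (hS.isProP hp)) _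
      (hK.isPGroup_quotient N)

/-- Ribes. If `G = G₁ *_p ⋯ *_p Gₙ` is a free pro-`p` product of
closed subgroups, then for any `σ₁, …, σₙ ∈ G` also
`G = G₁^{σ₁} *_p ⋯ *_p Gₙ^{σₙ}`, where `Gᵢ^{σᵢ} = σᵢ⁻¹ Gᵢ σᵢ`. -/
theorem statement19 (p : ℕ) (hp : p.Prime) (G : Type*) [Group G] [TopologicalSpace G]
    (hG : IsProP p G) (n : ℕ) (Gs : Fin n → Subgroup G)
    (hclosed : ∀ i, IsClosed ((Gs i) : Set G))
    (hfree : IsFreeProPProductFam p G Gs) (σ : Fin n → G) :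
    IsFreeProPProductFam p G
      (fun i => (Gs i).map (MulAut.conj (σ i)⁻¹).toMonoidHom) :=
  statement19_general p hp G hG n Gs hfree σ
end
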